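/- Let α : G → Aut(K(H)) be an action on compact operators and let ᾱ : G → Aut(K(H̄)) be the conjugate action on the conjugate Hilbert space, ᾱ_g(T̄) = conj(α_g(T)). Then G_{ᾱ} = {(g, v̄) : (g,v) ∈ G_α}, and the map (g,v) ↦ (g, v̄) is a group isomorphism G_α → G_{ᾱ} over G which conjugates the 𝕋-inclusion, i.e. it sends (e, z·1) to (e, z̄·1). Consequently [G_{ᾱ}] = [G_α]⁻¹ in Twist(G). -/

import Mathlib

/-! Conjugation `T ↦ T̄` is a star monoid isomorphism `B(H) ≃⋆* B(H̄)` that preserves compactness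
and intertwines `α` with `ᾱ`. Transporting the implementing-unitary condition `α_g = Ad v` along
it gives `ᾱ_g = Ad v̄`, and since the isomorphism is conjugate-linear the central unitary `z·1`
goes to `z̄·1 = z⁻¹·1`. -/

def ImplementsOn {A : Type*} [Mul A] [Star A] (P : A → Prop) (α : A → A) (v : A) : Prop :=
  ∀ T, P T → α T = v * T * star v

namespace StarMulEquiv

variable {A B : Type*} [Monoid A] [StarMul A] [Monoid B] [StarMul B]

theorem map_mem_unitary_iff (e : A ≃⋆* B) {v : A} : e v ∈ unitary B ↔ v ∈ unitary A :=
  ⟨fun h => by simpa using Unitary.map_mem e.symm h, Unitary.map_mem e⟩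

variable (e : A ≃⋆* B) {P : A → Prop} {Q : B → Prop} {α : A → A} {β : B → B}

theorem implementsOn_map_iff (hQ : ∀ T, Q (e T) ↔ P T) (hβ : ∀ T, P T → β (e T) = e (α T))
    (v : A) : ImplementsOn Q β (e v) ↔ ImplementsOn P α v := by
  simp only [ImplementsOn, (EquivLike.surjective e).forall, hQ]
  refine forall₂_congr fun T hT => ?_
  rw [hβ T hT, ← map_star, ← map_mul, ← map_mul, (EquivLike.injective e).eq_iff]

theorem implementsOn_iff_exists_map (hQ : ∀ T, Q (e T) ↔ P T)
    (hβ : ∀ T, P T → β (e T) = e (α T)) {u : B} (hu : u ∈ unitary B) :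
    ImplementsOn Q β u ↔ ∃ v ∈ unitary A, ImplementsOn P α v ∧ u = e v := by
  obtain ⟨v, rfl⟩ := EquivLike.surjective e u
  rw [e.map_mem_unitary_iff] at hu
  rw [e.implementsOn_map_iff hQ hβ]
  constructor
  · exact fun h => ⟨v, hu, h, rfl⟩
  · rintro ⟨w, -, hw, hvw⟩
    rwa [EquivLike.injective e hvw]

end StarMulEquiv

theorem stmt12_general {G : Type*}
    {H H' : Type*}
    [NormedAddCommGroup H] [InnerProductSpace ℂ H] [CompleteSpace H]
    [NormedAddCommGroup H'] [InnerProductSpace ℂ H'] [CompleteSpace H']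
    -- the conjugation map `T ↦ T̄` from `B(H)` to `B(H̄)`
    (bar : (H →L[ℂ] H) → (H' →L[ℂ] H'))
    (hbij : Function.Bijective bar)
    (hmul : ∀ S T : H →L[ℂ] H, bar (S * T) = bar S * bar T)
    (hone : bar 1 = 1)
    (hstar : ∀ T : H →L[ℂ] H, bar (star T) = star (bar T))
    (hsmul : ∀ (z : ℂ) (T : H →L[ℂ] H), bar (z • T) = (starRingEnd ℂ z) • bar T)
    (hcpt : ∀ T : H →L[ℂ] H, IsCompactOperator ⇑T ↔ IsCompactOperator ⇑(bar T))
    -- the action `α` and its conjugate `ᾱ`, with `ᾱ_g (T̄) = conj (α_g T)`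
    (α : G → (H →L[ℂ] H) → (H →L[ℂ] H))
    (αbar : G → (H' →L[ℂ] H') → (H' →L[ℂ] H'))
    (hconj : ∀ (g : G) (T : H →L[ℂ] H), IsCompactOperator ⇑T →
      αbar g (bar T) = bar (α g T)) :
    -- (1) `G_ᾱ = {(g, v̄) : (g,v) ∈ G_α}`
    (∀ (g : G) (u' : H' →L[ℂ] H'), u' ∈ unitary (H' →L[ℂ] H') →
      ((∀ T' : H' →L[ℂ] H', IsCompactOperator ⇑T' →
          αbar g T' = u' * T' * star u') ↔
        ∃ v : H →L[ℂ] H, v ∈ unitary (H →L[ℂ] H) ∧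
          (∀ T : H →L[ℂ] H, IsCompactOperator ⇑T → α g T = v * T * star v) ∧
          u' = bar v)) ∧
    -- (2) `(g,v) ↦ (g, v̄)` is multiplicative and bijective
    (∀ v w : H →L[ℂ] H, bar (v * w) = bar v * bar w) ∧
    (Function.Injective fun p : G × (H →L[ℂ] H) => (p.1, bar p.2)) ∧
    (∀ v : H →L[ℂ] H, v ∈ unitary (H →L[ℂ] H) → bar v ∈ unitary (H' →L[ℂ] H')) ∧
    -- (3) it conjugates the `𝕋`-inclusion: `(e, z·1) ↦ (e, z̄·1)`
    (∀ z : Circle, bar ((z : ℂ) • (1 : H →L[ℂ] H)) =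
      ((z⁻¹ : Circle) : ℂ) • (1 : H' →L[ℂ] H')) := by
  let e : (H →L[ℂ] H) ≃⋆* (H' →L[ℂ] H') :=
    .ofBijective { toFun := bar, map_one' := hone, map_mul' := hmul, map_star' := hstar } hbij
  refine ⟨fun g u' hu' => e.implementsOn_iff_exists_map (P := fun T => IsCompactOperator ⇑T)
      (Q := fun T => IsCompactOperator ⇑T) (fun T => (hcpt T).symm) (hconj g) hu',
    hmul, Function.injective_id.prodMap hbij.1, fun _ => Unitary.map_mem e, fun z => ?_⟩
  rw [hsmul, hone, Circle.coe_inv_eq_conj]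

/-- Let `α : G → Aut(K(H))` be an action on compact operators and `ᾱ` the conjugate
action on the conjugate Hilbert space `H̄` (described via the conjugate-linear,
multiplicative, star-preserving bijection `bar : B(H) → B(H̄)`, `T ↦ T̄`).
Then `G_ᾱ = {(g, v̄) : (g, v) ∈ G_α}` and `(g, v) ↦ (g, v̄)` is a group isomorphism
`G_α → G_ᾱ` over `G` which conjugates the `𝕋`-inclusion, i.e. sends `(e, z·1)` to
`(e, z̄·1)`; consequently `[G_ᾱ] = [G_α]⁻¹` in `Twist(G)`. -/
theorem stmt12 {G : Type*} [Group G]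
    {H H' : Type*}
    [NormedAddCommGroup H] [InnerProductSpace ℂ H] [CompleteSpace H]
    [NormedAddCommGroup H'] [InnerProductSpace ℂ H'] [CompleteSpace H']
    -- the conjugation map `T ↦ T̄` from `B(H)` to `B(H̄)`
    (bar : (H →L[ℂ] H) → (H' →L[ℂ] H'))
    (hbij : Function.Bijective bar)
    (hmul : ∀ S T : H →L[ℂ] H, bar (S * T) = bar S * bar T)
    (hone : bar 1 = 1)
    (hstar : ∀ T : H →L[ℂ] H, bar (star T) = star (bar T))
    (hsmul : ∀ (z : ℂ) (T : H →L[ℂ] H), bar (z • T) = (starRingEnd ℂ z) • bar T)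
    (hcpt : ∀ T : H →L[ℂ] H, IsCompactOperator ⇑T ↔ IsCompactOperator ⇑(bar T))
    -- the action `α` and its conjugate `ᾱ`, with `ᾱ_g (T̄) = conj (α_g T)`
    (α : G → (H →L[ℂ] H) → (H →L[ℂ] H))
    (αbar : G → (H' →L[ℂ] H') → (H' →L[ℂ] H'))
    (hconj : ∀ (g : G) (T : H →L[ℂ] H), IsCompactOperator ⇑T →
      αbar g (bar T) = bar (α g T)) :
    -- (1) `G_ᾱ = {(g, v̄) : (g,v) ∈ G_α}`
    (∀ (g : G) (u' : H' →L[ℂ] H'), u' ∈ unitary (H' →L[ℂ] H') →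
      ((∀ T' : H' →L[ℂ] H', IsCompactOperator ⇑T' →
          αbar g T' = u' * T' * star u') ↔
        ∃ v : H →L[ℂ] H, v ∈ unitary (H →L[ℂ] H) ∧
          (∀ T : H →L[ℂ] H, IsCompactOperator ⇑T → α g T = v * T * star v) ∧
          u' = bar v)) ∧
    -- (2) `(g,v) ↦ (g, v̄)` is multiplicative and bijective
    (∀ v w : H →L[ℂ] H, bar (v * w) = bar v * bar w) ∧
    (Function.Injective fun p : G × (H →L[ℂ] H) => (p.1, bar p.2)) ∧
    (∀ v : H →L[ℂ] H, v ∈ unitary (H →L[ℂ] H) → bar v ∈ unitary (H' →L[ℂ] H')) ∧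
    -- (3) it conjugates the `𝕋`-inclusion: `(e, z·1) ↦ (e, z̄·1)`
    (∀ z : Circle, bar ((z : ℂ) • (1 : H →L[ℂ] H)) =
      ((z⁻¹ : Circle) : ℂ) • (1 : H' →L[ℂ] H')) :=
  stmt12_general bar hbij hmul hone hstar hsmul hcpt α αbar hconj
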